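/- arXiv:1511.05466 — 7 statements merged into one kernel-verified Lean document; each statement's English description precedes it below -/
import Mathlib

section
/- Assume D is barreled (the paper assumes D complete and reflexive; reflexive locally convex spaces are barreled). A sequence (ζ_n)_{n≥1} of elements of D^× is Bessel-like if and only if Σ_{k=1}^∞ |ζ_k(η)|² < ∞ for every η ∈ D and the analysis operator F : D → ℓ², F η := (conj(ζ_k(η)))_{k≥1}, is a continuous linear map from D[t] into ℓ². -/
/-! If `ζ` is Bessel-like, the truncated analysis operators `η ↦ Σ_{k<N} conj (ζ k η) e_k` converge
pointwise in `ℓ²`, so on a barrelled space their limit is continuous by Banach–Steinhaus.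
Conversely, a continuous `F` maps bounded sets to norm-bounded sets, and
`Σ_{k<N} |ζ k η|² ≤ ‖F η‖²`. -/

open Filter Topology
open scoped lp

noncomputable section

/-- A sequence `ζ` in the conjugate dual `D^×` is Bessel-like if on every von Neumann bounded
subset `M` of `D` the quantities `Σ_k |ζ k η|²` are uniformly bounded. -/
def BesselLike {D : Type*} [AddCommGroup D] [Module ℂ D] [TopologicalSpace D]
    (ζ : ℕ → (D →SL[starRingEnd ℂ] ℂ)) : Prop :=
  ∀ M : Set D, Bornology.IsVonNBounded ℂ M →
    ∃ γ : ℝ, ∀ η ∈ M, ∀ N : ℕ, ∑ k ∈ Finset.range N, ‖ζ k η‖ ^ 2 ≤ γ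

theorem lp.sum_sq_norm_le_sq_norm {α : Type*} {E : α → Type*} [∀ i, NormedAddCommGroup (E i)]
    (f : lp E 2) (s : Finset α) : ∑ i ∈ s, ‖f i‖ ^ 2 ≤ ‖f‖ ^ 2 := by
  simpa using lp.sum_rpow_le_norm_rpow (by norm_num) f s

theorem memℓp_two_of_summable_sq_norm {α : Type*} {E : α → Type*} [∀ i, NormedAddCommGroup (E i)]
    {f : ∀ i, E i} (hf : Summable fun i => ‖f i‖ ^ 2) : Memℓp f 2 :=
  memℓp_gen (by simpa using hf)

section AnalysisOperator

variable {D : Type*} [AddCommGroup D] [Module ℂ D] [TopologicalSpace D]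

def partialAnalysis (ζ : ℕ → (D →SL[starRingEnd ℂ] ℂ)) (N : ℕ) : D →L[ℂ] ℓ²(ℕ, ℂ) :=
  ∑ k ∈ Finset.range N,
    (lp.singleContinuousLinearMap ℂ (fun _ => ℂ) 2 k).comp
      ((starL ℂ : ℂ ≃L⋆[ℂ] ℂ).toContinuousLinearMap.comp (ζ k))

theorem partialAnalysis_apply (ζ : ℕ → (D →SL[starRingEnd ℂ] ℂ)) (N : ℕ) (η : D) :
    partialAnalysis ζ N η = ∑ k ∈ Finset.range N, lp.single 2 k (starRingEnd ℂ (ζ k η)) := by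
  simp [partialAnalysis]

variable {ζ : ℕ → (D →SL[starRingEnd ℂ] ℂ)}

theorem tendsto_partialAnalysis (hζ : ∀ η, Summable fun k => ‖ζ k η‖ ^ 2) :
    Tendsto (fun N η => partialAnalysis ζ N η) atTop
      (𝓝 fun η => ⟨fun k => starRingEnd ℂ (ζ k η),
        memℓp_two_of_summable_sq_norm (by simpa using hζ η)⟩) := by
  refine tendsto_pi_nhds.mpr fun η => ?_
  simp only [partialAnalysis_apply]
  exact (lp.hasSum_single (by norm_num) _).tendsto_sum_nat

variable [IsTopologicalAddGroup D] [ContinuousSMul ℂ D] [BarrelledSpace ℂ D]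

/-- Continuous by Banach–Steinhaus, as a pointwise limit of the continuous maps
`partialAnalysis ζ N` on a barrelled space. -/
def analysisOperator (hζ : ∀ η, Summable fun k => ‖ζ k η‖ ^ 2) : D →L[ℂ] ℓ²(ℕ, ℂ) :=
  letI := IsTopologicalAddGroup.rightUniformSpace D
  haveI := isUniformAddGroup_of_addCommGroup (G := D)
  continuousLinearMapOfTendsto (partialAnalysis ζ) (tendsto_partialAnalysis hζ)

theorem analysisOperator_apply (hζ : ∀ η, Summable fun k => ‖ζ k η‖ ^ 2) (η : D) (k : ℕ) :
    analysisOperator hζ η k = starRingEnd ℂ (ζ k η) :=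
  rfl

end AnalysisOperator

namespace BesselLike

variable {D : Type*} [AddCommGroup D] [Module ℂ D] [TopologicalSpace D]
  {ζ : ℕ → (D →SL[starRingEnd ℂ] ℂ)}

theorem summable_sq_norm [ContinuousSMul ℂ D] (h : BesselLike ζ) (η : D) :
    Summable fun k => ‖ζ k η‖ ^ 2 := by
  obtain ⟨γ, hγ⟩ := h {η} (Bornology.isVonNBounded_singleton η)
  exact summable_of_sum_range_le (fun k => by positivity) (hγ η rfl)

theorem of_analysisOperator (F : D →L[ℂ] ℓ²(ℕ, ℂ))
    (hF : ∀ η k, F η k = starRingEnd ℂ (ζ k η)) : BesselLike ζ := by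
  intro M hM
  obtain ⟨r, hr⟩ := (NormedSpace.isVonNBounded_iff' ℂ).mp (hM.image F)
  refine ⟨r ^ 2, fun η hη N => ?_⟩
  calc ∑ k ∈ Finset.range N, ‖ζ k η‖ ^ 2
      = ∑ k ∈ Finset.range N, ‖F η k‖ ^ 2 := by simp only [hF, RCLike.norm_conj]
    _ ≤ ‖F η‖ ^ 2 := lp.sum_sq_norm_le_sq_norm (F η) _
    _ ≤ r ^ 2 := by gcongr; exact hr _ ⟨η, hη, rfl⟩

end BesselLike

theorem statement5_general {D : Type*} [AddCommGroup D] [Module ℂ D]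
    [TopologicalSpace D] [IsTopologicalAddGroup D] [ContinuousSMul ℂ D] [BarrelledSpace ℂ D]
    (ζ : ℕ → (D →SL[starRingEnd ℂ] ℂ)) :
    BesselLike ζ ↔
      ((∀ η : D, Summable fun k => ‖ζ k η‖ ^ 2) ∧
        ∃ F : D →L[ℂ] lp (fun _ : ℕ => ℂ) 2, ∀ (η : D) (k : ℕ),
          (F η) k = starRingEnd ℂ (ζ k η)) :=
  ⟨fun h => ⟨h.summable_sq_norm, analysisOperator h.summable_sq_norm, analysisOperator_apply _⟩,
    fun ⟨_, F, hF⟩ => .of_analysisOperator F hF⟩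

/-- Proposition 2.10 (`prop_210`) of Bellomonte–Trapani: for `D` barreled (the paper assumes `D`
complete and reflexive), a sequence `ζ ⊂ D^×` is Bessel-like if and only if
`Σ_k |ζ k η|² < ∞` for every `η ∈ D` and the analysis operator
`F : η ↦ (conj (ζ k η))_k` is a continuous linear map from `D[t]` into `ℓ²`. -/
theorem statement5 {D : Type*} [AddCommGroup D] [Module ℂ D] [Module ℝ D] [IsScalarTower ℝ ℂ D]
    [TopologicalSpace D] [IsTopologicalAddGroup D] [ContinuousSMul ℂ D] [T2Space D]
    [LocallyConvexSpace ℝ D] [BarrelledSpace ℂ D]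
    (ζ : ℕ → (D →SL[starRingEnd ℂ] ℂ)) :
    BesselLike ζ ↔
      ((∀ η : D, Summable fun k => ‖ζ k η‖ ^ 2) ∧
        ∃ F : D →L[ℂ] lp (fun _ : ℕ => ℂ) 2, ∀ (η : D) (k : ℕ),
          (F η) k = starRingEnd ℂ (ζ k η)) :=
  statement5_general ζ
end
end

section
/- Assume the strong conjugate dual D^×[t^×] is sequentially complete (the paper assumes D complete and reflexive, which makes D^×[t^×] quasi-complete). If (ζ_n)_{n≥1} ⊂ D^× is a Bessel-like sequence and (a_n)_{n≥1} ∈ ℓ², then the series Σ_{n=1}^∞ a_n ζ_n converges in D^×[t^×], and for every von Neumann bounded subset M of D one has sup_{η∈M} |Σ_{k=1}^∞ a_k ζ_k(η)| ≤ γ_M^{1/2} ‖(a_n)‖_{ℓ²}. -/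
open Filter Topology

noncomputable section

/-- Convergence of a series (sequence of partial sums) in a topological space. -/
def SeriesTendsTo {E : Type*} [AddCommMonoid E] [TopologicalSpace E] (a : ℕ → E) (f : E) : Prop :=
  Tendsto (fun N => ∑ n ∈ Finset.range N, a n) atTop (𝓝 f)

/-! By Cauchy–Schwarz, on a bounded set `M` the block `∑_{m ≤ k < n} a_k ζ_k(η)` is bounded by
`γ_M^{1/2} (∑_{k ≥ m} |a_k|²)^{1/2}` uniformly in `η ∈ M`, so the partial sums are Cauchy for the
topology of uniform convergence on bounded sets. The estimate for the limit follows from the same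
bound on the partial sums by pointwise convergence. -/

open Finset

theorem norm_sum_mul_le_of_sum_sq_le {R : Type*} [SeminormedRing R] (a f : ℕ → R) {γ : ℝ}
    (hf : ∀ N, ∑ k ∈ range N, ‖f k‖ ^ 2 ≤ γ) (s : Finset ℕ) :
    ‖∑ k ∈ s, a k * f k‖ ≤ √(∑ k ∈ s, ‖a k‖ ^ 2) * √γ := by
  obtain ⟨N, hsN⟩ := s.exists_nat_subset_range
  calc ‖∑ k ∈ s, a k * f k‖ ≤ ∑ k ∈ s, ‖a k‖ * ‖f k‖ :=
        (norm_sum_le _ _).trans (sum_le_sum fun k _ => norm_mul_le _ _)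
    _ ≤ √(∑ k ∈ s, ‖a k‖ ^ 2) * √(∑ k ∈ s, ‖f k‖ ^ 2) := Real.sum_mul_le_sqrt_mul_sqrt _ _ _
    _ ≤ √(∑ k ∈ s, ‖a k‖ ^ 2) * √γ := by
        gcongr
        exact (sum_le_sum_of_subset_of_nonneg hsN fun _ _ _ => by positivity).trans (hf N)

theorem ContinuousLinearMap.cauchySeq_of_norm_sub_apply_le {𝕜₁ 𝕜₂ E F : Type*} [NormedField 𝕜₁]
    [NormedField 𝕜₂] {σ : 𝕜₁ →+* 𝕜₂} [AddCommGroup E] [Module 𝕜₁ E] [TopologicalSpace E]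
    [SeminormedAddCommGroup F] [NormedSpace 𝕜₂ F] {u : ℕ → E →SL[σ] F}
    (hu : ∀ M : Set E, Bornology.IsVonNBounded 𝕜₁ M → ∃ b : ℕ → ℝ, Tendsto b atTop (𝓝 0) ∧
      ∀ m n, m ≤ n → ∀ x ∈ M, ‖u n x - u m x‖ ≤ b m) :
    CauchySeq u := by
  rw [cauchySeq_iff_tendsto, uniformity_eq_comap_nhds_zero, tendsto_comap_iff,
    ContinuousLinearMap.hasBasis_nhds_zero.tendsto_right_iff]
  rintro ⟨M, V⟩ ⟨hM, hV⟩
  obtain ⟨ε, hε, hball⟩ := Metric.mem_nhds_iff.1 hV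
  obtain ⟨b, hb0, hb⟩ := hu M hM
  obtain ⟨N, hN⟩ := eventually_atTop.1 (hb0.eventually (gt_mem_nhds hε))
  refine eventually_atTop.2 ⟨(N, N), ?_⟩
  rintro ⟨m, n⟩ ⟨hm, hn⟩ x hx
  apply hball
  rw [mem_ball_zero_iff]
  simp only [Function.comp_apply, Prod.map_apply, sub_apply]
  rcases le_total m n with hmn | hnm
  · exact (hb m n hmn x hx).trans_lt (hN m hm)
  · rw [norm_sub_rev]
    exact (hb n m hnm x hx).trans_lt (hN n hn)

theorem BesselLike.cauchySeq_partialSums {D : Type*} [AddCommGroup D] [Module ℂ D]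
    [TopologicalSpace D] {ζ : ℕ → D →SL[starRingEnd ℂ] ℂ} (hζ : BesselLike ζ) {a : ℕ → ℂ}
    (ha : Summable fun n => ‖a n‖ ^ 2) :
    CauchySeq fun N => ∑ n ∈ range N, a n • ζ n := by
  refine ContinuousLinearMap.cauchySeq_of_norm_sub_apply_le fun M hM => ?_
  obtain ⟨γ, hγ⟩ := hζ M hM
  refine ⟨fun m => √(∑' k, ‖a (k + m)‖ ^ 2) * √γ, ?_, fun m n hmn η hη => ?_⟩
  · have htail := tendsto_sum_nat_add fun k => ‖a k‖ ^ 2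
    simpa using ((Real.continuous_sqrt.tendsto 0).comp htail).mul_const √γ
  · rw [← sub_apply, ← sum_Ico_eq_sub _ hmn]
    simp only [_root_.sum_apply, smul_apply, smul_eq_mul]
    refine (norm_sum_mul_le_of_sum_sq_le a (ζ · η) (hγ η hη) _).trans ?_
    gcongr
    rw [sum_Ico_eq_sum_range]
    simp_rw [add_comm m]
    exact ((summable_nat_add_iff m).2 ha).sum_le_tsum _ fun _ _ => by positivity

theorem statement6_general {D : Type*} [AddCommGroup D] [Module ℂ D]
    [TopologicalSpace D] [ContinuousSMul ℂ D]
    (hseqcompl : ∀ u : ℕ → (D →SL[starRingEnd ℂ] ℂ), CauchySeq u → ∃ L, Tendsto u atTop (𝓝 L))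
    (ζ : ℕ → (D →SL[starRingEnd ℂ] ℂ)) (hζ : BesselLike ζ)
    (a : ℕ → ℂ) (ha : Summable fun n => ‖a n‖ ^ 2) :
    ∃ L : D →SL[starRingEnd ℂ] ℂ,
      SeriesTendsTo (fun n => a n • ζ n) L ∧
      ∀ M : Set D, Bornology.IsVonNBounded ℂ M →
        ∀ γ : ℝ, (∀ η ∈ M, ∀ N : ℕ, ∑ k ∈ Finset.range N, ‖ζ k η‖ ^ 2 ≤ γ) →
          ∀ η ∈ M, ‖L η‖ ≤ Real.sqrt γ * Real.sqrt (∑' n, ‖a n‖ ^ 2) := by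
  obtain ⟨L, hL⟩ := hseqcompl _ (hζ.cauchySeq_partialSums ha)
  refine ⟨L, hL, fun M _ γ hγ η hη => le_of_tendsto' (hL.eval_const η).norm fun N => ?_⟩
  simp only [_root_.sum_apply, smul_apply, smul_eq_mul]
  calc ‖∑ k ∈ range N, a k * ζ k η‖ ≤ √(∑ k ∈ range N, ‖a k‖ ^ 2) * √γ :=
        norm_sum_mul_le_of_sum_sq_le a (ζ · η) (hγ η hη) _
    _ ≤ √γ * √(∑' n, ‖a n‖ ^ 2) := by
        rw [mul_comm]
        gcongr
        exact ha.sum_le_tsum _ fun _ _ => by positivity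

/-- From the proof of Proposition 2.10 of Bellomonte–Trapani: if the strong conjugate dual
`D^× [t^×]` (here: the space `D →SL[conj] ℂ` with its topology of uniform convergence on von
Neumann bounded sets) is sequentially complete, `ζ ⊂ D^×` is Bessel-like and `(a_n) ∈ ℓ²`, then
`Σ_n a_n ζ_n` converges in `D^×[t^×]`, and for every von Neumann bounded `M ⊆ D` (with bound
`γ` for `Σ_k |ζ k η|²` on `M`) one has `sup_{η ∈ M} |Σ_k a_k ζ_k(η)| ≤ γ^{1/2} ‖a‖_{ℓ²}`. -/
theorem statement6 {D : Type*} [AddCommGroup D] [Module ℂ D] [Module ℝ D] [IsScalarTower ℝ ℂ D]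
    [TopologicalSpace D] [IsTopologicalAddGroup D] [ContinuousSMul ℂ D] [T2Space D]
    [LocallyConvexSpace ℝ D]
    (hseqcompl : ∀ u : ℕ → (D →SL[starRingEnd ℂ] ℂ), CauchySeq u → ∃ L, Tendsto u atTop (𝓝 L))
    (ζ : ℕ → (D →SL[starRingEnd ℂ] ℂ)) (hζ : BesselLike ζ)
    (a : ℕ → ℂ) (ha : Summable fun n => ‖a n‖ ^ 2) :
    ∃ L : D →SL[starRingEnd ℂ] ℂ,
      SeriesTendsTo (fun n => a n • ζ n) L ∧
      ∀ M : Set D, Bornology.IsVonNBounded ℂ M →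
        ∀ γ : ℝ, (∀ η ∈ M, ∀ N : ℕ, ∑ k ∈ Finset.range N, ‖ζ k η‖ ^ 2 ≤ γ) →
          ∀ η ∈ M, ‖L η‖ ≤ Real.sqrt γ * Real.sqrt (∑' n, ‖a n‖ ^ 2) :=
  statement6_general hseqcompl ζ hζ a ha
end
end

section
/- Assume the strong conjugate dual D^×[t^×] is sequentially complete (the paper assumes D complete and reflexive). A sequence (ζ_n)_{n≥1} of elements of D^× is Bessel-like if and only if, for every orthonormal basis (e_n)_{n≥1} of H, there exists a continuous linear map W : H → D^×[t^×] such that W e_n = ζ_n for every n ≥ 1. -/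
/-!
For `x ∈ H` the partial sums `∑_{k<N} ⟪e_k, x⟫ ζ_k` are Cauchy in the strong dual: on a bounded
set `M`, Cauchy–Schwarz bounds a block of the series at `η ∈ M` by `√γ_M` times the corresponding
block of the Bessel series of `x`. Sequential completeness gives the limit `W x`, and the same
estimate `|W x η| ≤ √γ_M ‖x‖` makes `W` continuous.

Conversely, a separable infinite-dimensional Hilbert space has an orthonormal basis indexed by `ℕ`.
Given `W`, continuity makes the functionals `x ↦ W x η`, `η ∈ M`, equicontinuous, hence bounded
in norm by some `C`, and Bessel's inequality for these functionals bounds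
`∑ |ζ_k η|² = ∑ |W e_k η|²` by `C²`.
-/

open Filter Topology Bornology

noncomputable section

def IsONBasisSeq {K : Type*} [NormedAddCommGroup K] [InnerProductSpace ℂ K] (e : ℕ → K) : Prop :=
  Orthonormal ℂ e ∧ Dense ((Submodule.span ℂ (Set.range e) : Submodule ℂ K) : Set K)

section StrongDual

variable {𝕜₁ 𝕜₂ : Type*} [NormedField 𝕜₁] [NontriviallyNormedField 𝕜₂] {σ : 𝕜₁ →+* 𝕜₂}
  {D H F : Type*} [AddCommGroup D] [Module 𝕜₁ D] [TopologicalSpace D]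
  [SeminormedAddCommGroup H] [NormedSpace 𝕜₂ H] [SeminormedAddCommGroup F] [NormedSpace 𝕜₂ F]

theorem LinearMap.continuous_of_forall_isVonNBounded_exists_bound
    (T : H →ₗ[𝕜₂] (D →SL[σ] F))
    (hT : ∀ M : Set D, IsVonNBounded 𝕜₁ M → ∃ C, ∀ x, ∀ η ∈ M, ‖T x η‖ ≤ C * ‖x‖) :
    Continuous T := by
  refine continuous_of_continuousAt_zero T ?_
  rw [ContinuousAt, map_zero, ContinuousLinearMap.hasBasis_nhds_zero.tendsto_right_iff]
  rintro ⟨M, U⟩ ⟨hM, hU⟩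
  obtain ⟨C, hC⟩ := hT M hM
  obtain ⟨ε, hε, hball⟩ := Metric.mem_nhds_iff.mp hU
  have hsmall : Tendsto (fun x : H => C * ‖x‖) (𝓝 0) (𝓝 0) := by
    simpa using (tendsto_const_nhds (x := C)).mul (tendsto_norm_zero (E := H))
  filter_upwards [hsmall.eventually (gt_mem_nhds hε)] with x hx η hη
  exact hball (mem_ball_zero_iff.mpr ((hC x η hη).trans_lt hx))

variable [ContinuousSMul 𝕜₁ D]

namespace ContinuousLinearMap

def flipApply (T : H →L[𝕜₂] (D →SL[σ] F)) (η : D) : H →L[𝕜₂] F where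
  toFun x := T x η
  map_add' x y := by simp
  map_smul' a x := by simp
  cont := (continuous_eval_const η).comp T.continuous

@[simp]
theorem flipApply_apply (T : H →L[𝕜₂] (D →SL[σ] F)) (η : D) (x : H) :
    T.flipApply η x = T x η :=
  rfl

theorem exists_norm_flipApply_le (T : H →L[𝕜₂] (D →SL[σ] F)) {M : Set D}
    (hM : IsVonNBounded 𝕜₁ M) : ∃ C ≥ 0, ∀ η ∈ M, ‖T.flipApply η‖ ≤ C := by
  have hequi : EquicontinuousAt ((↑) ∘ fun η : M => T.flipApply η) 0 := by
    rw [Metric.equicontinuousAt_iff_right]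
    intro ε hε
    have hT := T.continuous.tendsto 0
    rw [map_zero, ContinuousLinearMap.hasBasis_nhds_zero.tendsto_right_iff] at hT
    filter_upwards [hT (M, Metric.ball 0 ε) ⟨hM, Metric.ball_mem_nhds 0 hε⟩] with x hx η
    simpa [dist_comm] using hx η η.2
  obtain ⟨C, hC0, hC⟩ := ((NormedSpace.equicontinuous_TFAE _).out 0 6).mp hequi
  exact ⟨C, hC0, fun η hη => hC ⟨η, hη⟩⟩

end ContinuousLinearMap

end StrongDual

theorem Orthonormal.sum_norm_apply_sq_le {𝕜 E ι : Type*} [RCLike 𝕜] [NormedAddCommGroup E]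
    [InnerProductSpace 𝕜 E] [CompleteSpace E] {e : ι → E} (he : Orthonormal 𝕜 e)
    (φ : E →L[𝕜] 𝕜) (s : Finset ι) : ∑ k ∈ s, ‖φ (e k)‖ ^ 2 ≤ ‖φ‖ ^ 2 := by
  set v := (InnerProductSpace.toDual 𝕜 E).symm φ
  have hv : ∀ x, φ x = inner 𝕜 v x := fun x => InnerProductSpace.toDual_symm_apply.symm
  calc ∑ k ∈ s, ‖φ (e k)‖ ^ 2 = ∑ k ∈ s, ‖inner 𝕜 (e k) v‖ ^ 2 := by
        simp only [hv, norm_inner_symm]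
    _ ≤ ‖v‖ ^ 2 := he.sum_inner_products_le v
    _ = ‖φ‖ ^ 2 := by rw [LinearIsometryEquiv.norm_map]

theorem Orthonormal.countable {𝕜 E ι : Type*} [RCLike 𝕜] [NormedAddCommGroup E]
    [InnerProductSpace 𝕜 E] [TopologicalSpace.SeparableSpace E] {e : ι → E}
    (he : Orthonormal 𝕜 e) : Countable ι := by
  have hdist : ∀ i j, i ≠ j → dist (e i) (e j) ^ 2 = 2 := by
    intro i j hij
    rw [dist_eq_norm, @norm_sub_sq 𝕜, he.2 hij, he.1 i, he.1 j]
    norm_num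
  refine Pairwise.countable_of_isOpen_disjoint (s := fun i => Metric.ball (e i) (1 / 2))
    (fun i j hij => Metric.ball_disjoint_ball ?_) (fun _ => Metric.isOpen_ball)
    (fun _ => Metric.nonempty_ball.mpr (by norm_num))
  nlinarith [hdist i j hij, dist_nonneg (x := e i) (y := e j)]

theorem exists_isONBasisSeq {H : Type*} [NormedAddCommGroup H] [InnerProductSpace ℂ H]
    [CompleteSpace H] [TopologicalSpace.SeparableSpace H] (hH : ¬ FiniteDimensional ℂ H) :
    ∃ e : ℕ → H, IsONBasisSeq e := by
  obtain ⟨w, b, -⟩ := exists_hilbertBasis ℂ H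
  have : Countable w := b.orthonormal.countable
  have : Infinite w := by
    by_contra hfin
    have : Fintype w := @Fintype.ofFinite w (not_infinite_iff_finite.mp hfin)
    exact hH b.toOrthonormalBasis.toBasis.finiteDimensional_of_finite
  obtain ⟨_⟩ := nonempty_denumerable w
  let φ : ℕ ≃ w := (Denumerable.eqv w).symm
  refine ⟨b ∘ φ, b.orthonormal.comp φ φ.injective, ?_⟩
  rw [Set.range_comp, φ.range_eq_univ, Set.image_univ]
  exact Submodule.dense_iff_topologicalClosure_eq_top.mpr b.dense_span

namespace BesselLike

variable {D : Type*} [AddCommGroup D] [Module ℂ D] [TopologicalSpace D]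
  {ζ : ℕ → (D →SL[starRingEnd ℂ] ℂ)}

theorem exists_norm_sum_smul_apply_le (hζ : BesselLike ζ) {M : Set D}
    (hM : IsVonNBounded ℂ M) :
    ∃ C ≥ 0, ∀ η ∈ M, ∀ (c : ℕ → ℂ) (s : Finset ℕ),
      ‖(∑ k ∈ s, c k • ζ k) η‖ ≤ C * √(∑ k ∈ s, ‖c k‖ ^ 2) := by
  obtain ⟨γ, hγ⟩ := hζ M hM
  refine ⟨√γ, Real.sqrt_nonneg _, fun η hη c s => ?_⟩
  have hζs : ∑ k ∈ s, ‖ζ k η‖ ^ 2 ≤ γ :=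
    (Finset.sum_le_sum_of_subset_of_nonneg (Finset.subset_range_sup_succ s)
      fun _ _ _ => by positivity).trans (hγ η hη _)
  calc ‖(∑ k ∈ s, c k • ζ k) η‖ ≤ ∑ k ∈ s, ‖c k‖ * ‖ζ k η‖ := by
        simpa using norm_sum_le s fun k => c k * ζ k η
    _ ≤ √(∑ k ∈ s, ‖c k‖ ^ 2) * √(∑ k ∈ s, ‖ζ k η‖ ^ 2) := Real.sum_mul_le_sqrt_mul_sqrt _ _ _
    _ ≤ √γ * √(∑ k ∈ s, ‖c k‖ ^ 2) := by
        rw [mul_comm]; gcongr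

theorem cauchySeq_sum_smul (hζ : BesselLike ζ) {c : ℕ → ℂ}
    (hc : Summable fun k => ‖c k‖ ^ 2) :
    CauchySeq fun N => ∑ k ∈ Finset.range N, c k • ζ k := by
  suffices CauchySeq fun s : Finset ℕ => ∑ k ∈ s, c k • ζ k from
    this.comp_tendsto tendsto_finset_range
  rw [cauchySeq_finset_iff_sum_vanishing]
  intro V hV
  obtain ⟨⟨M, U⟩, ⟨hM, hU⟩, hMU⟩ := ContinuousLinearMap.hasBasis_nhds_zero.mem_iff.mp hV
  obtain ⟨ε, hε, hball⟩ := Metric.mem_nhds_iff.mp hU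
  obtain ⟨C, hC0, hC⟩ := hζ.exists_norm_sum_smul_apply_le hM
  have hδ : 0 < ε / (C + 1) := by positivity
  obtain ⟨s, hs⟩ := hc.vanishing (Iio_mem_nhds (pow_pos hδ 2))
  refine ⟨s, fun t ht => hMU fun η hη => hball (mem_ball_zero_iff.mpr ?_)⟩
  have htail : √(∑ k ∈ t, ‖c k‖ ^ 2) < ε / (C + 1) :=
    (Real.sqrt_lt' hδ).mpr (hs t ht)
  calc ‖(∑ k ∈ t, c k • ζ k) η‖ ≤ C * √(∑ k ∈ t, ‖c k‖ ^ 2) := hC η hη c t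
    _ ≤ (C + 1) * √(∑ k ∈ t, ‖c k‖ ^ 2) := by gcongr; linarith
    _ < (C + 1) * (ε / (C + 1)) := by gcongr
    _ = ε := by field_simp

variable [ContinuousSMul ℂ D] {H : Type*} [NormedAddCommGroup H] [InnerProductSpace ℂ H]
  {e : ℕ → H}

theorem exists_continuousLinearMap_apply_eq
    (hcompl : ∀ u : ℕ → (D →SL[starRingEnd ℂ] ℂ), CauchySeq u → ∃ L, Tendsto u atTop (𝓝 L))
    (hζ : BesselLike ζ) (he : Orthonormal ℂ e) :
    ∃ W : H →L[ℂ] (D →SL[starRingEnd ℂ] ℂ), ∀ n, W (e n) = ζ n := by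
  let S : ℕ → H →ₗ[ℂ] (D →SL[starRingEnd ℂ] ℂ) := fun N =>
    ∑ k ∈ Finset.range N, (innerₛₗ ℂ (e k)).smulRight (ζ k)
  have hS : ∀ N x, S N x = ∑ k ∈ Finset.range N, inner ℂ (e k) x • ζ k := by
    simp [S, LinearMap.sum_apply]
  choose L hL using fun x =>
    hcompl _ (hζ.cauchySeq_sum_smul (he.inner_products_summable x))
  have hSL : ∀ x, Tendsto (fun N => S N x) atTop (𝓝 (L x)) := by simpa only [hS] using hL
  let W := linearMapOfTendsto L S (tendsto_pi_nhds.mpr hSL)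
  have hbound : ∀ M : Set D, IsVonNBounded ℂ M → ∃ C, ∀ x, ∀ η ∈ M, ‖W x η‖ ≤ C * ‖x‖ := by
    intro M hM
    obtain ⟨C, hC0, hC⟩ := hζ.exists_norm_sum_smul_apply_le hM
    refine ⟨C, fun x η hη => le_of_tendsto ((continuous_eval_const η).tendsto _ |>.comp
      (hSL x)).norm (Eventually.of_forall fun N => ?_)⟩
    calc ‖S N x η‖ ≤ C * √(∑ k ∈ Finset.range N, ‖inner ℂ (e k) x‖ ^ 2) := by
          rw [hS]; exact hC η hη _ _
      _ ≤ C * ‖x‖ := by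
          gcongr
          exact (Real.sqrt_le_sqrt (he.sum_inner_products_le x)).trans_eq
            (Real.sqrt_sq (norm_nonneg x))
  refine ⟨⟨W, W.continuous_of_forall_isVonNBounded_exists_bound hbound⟩, fun n => ?_⟩
  refine tendsto_nhds_unique (hSL (e n)) (tendsto_atTop_of_eventually_const (i₀ := n + 1) ?_)
  intro N hN
  have hn : n ∈ Finset.range N := Finset.mem_range.mpr hN
  rw [hS, Finset.sum_eq_single_of_mem n hn fun k _ hkn => by
    rw [he.inner_eq_zero hkn]; exact zero_smul ℂ (ζ k)]
  rw [inner_self_eq_norm_sq_to_K, he.1 n]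
  simp

theorem of_continuousLinearMap_apply_eq [CompleteSpace H] (he : Orthonormal ℂ e)
    (W : H →L[ℂ] (D →SL[starRingEnd ℂ] ℂ)) (hW : ∀ n, W (e n) = ζ n) : BesselLike ζ := by
  intro M hM
  obtain ⟨C, -, hC⟩ := W.exists_norm_flipApply_le hM
  refine ⟨C ^ 2, fun η hη N => ?_⟩
  calc ∑ k ∈ Finset.range N, ‖ζ k η‖ ^ 2 = ∑ k ∈ Finset.range N, ‖W.flipApply η (e k)‖ ^ 2 := by
        simp [hW]
    _ ≤ ‖W.flipApply η‖ ^ 2 := he.sum_norm_apply_sq_le _ _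
    _ ≤ C ^ 2 := by gcongr; exact hC η hη

end BesselLike

theorem statement7_general {D H : Type*} [AddCommGroup D] [Module ℂ D]
    [TopologicalSpace D] [ContinuousSMul ℂ D]
    [NormedAddCommGroup H] [InnerProductSpace ℂ H] [CompleteSpace H]
    [TopologicalSpace.SeparableSpace H] (hinfdim : ¬ FiniteDimensional ℂ H)
    (hseqcompl : ∀ u : ℕ → (D →SL[starRingEnd ℂ] ℂ), CauchySeq u → ∃ L, Tendsto u atTop (𝓝 L))
    (ζ : ℕ → (D →SL[starRingEnd ℂ] ℂ)) :
    BesselLike ζ ↔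
      ∀ e : ℕ → H, IsONBasisSeq e →
        ∃ W : H →L[ℂ] (D →SL[starRingEnd ℂ] ℂ), ∀ n : ℕ, W (e n) = ζ n := by
  refine ⟨fun hζ e he => hζ.exists_continuousLinearMap_apply_eq hseqcompl he.1, fun h => ?_⟩
  obtain ⟨e, he⟩ := exists_isONBasisSeq hinfdim
  obtain ⟨W, hW⟩ := h e he
  exact .of_continuousLinearMap_apply_eq he.1 W hW

/-- Proposition 2.11 (`prop_211`) of Bellomonte–Trapani: assume the strong conjugate dual
`D^×[t^×]` is sequentially complete and `H` is an infinite-dimensional separable complex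
Hilbert space. A sequence `ζ ⊂ D^×` is Bessel-like if and only if, for every orthonormal basis
`(e_n)` of `H`, there exists a continuous linear map `W : H → D^×[t^×]` with `W e_n = ζ_n`. -/
theorem statement7 {D H : Type*} [AddCommGroup D] [Module ℂ D] [Module ℝ D] [IsScalarTower ℝ ℂ D]
    [TopologicalSpace D] [IsTopologicalAddGroup D] [ContinuousSMul ℂ D] [T2Space D]
    [LocallyConvexSpace ℝ D]
    [NormedAddCommGroup H] [InnerProductSpace ℂ H] [CompleteSpace H]
    [TopologicalSpace.SeparableSpace H] (hinfdim : ¬ FiniteDimensional ℂ H)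
    (hseqcompl : ∀ u : ℕ → (D →SL[starRingEnd ℂ] ℂ), CauchySeq u → ∃ L, Tendsto u atTop (𝓝 L))
    (ζ : ℕ → (D →SL[starRingEnd ℂ] ℂ)) :
    BesselLike ζ ↔
      ∀ e : ℕ → H, IsONBasisSeq e →
        ∃ W : H →L[ℂ] (D →SL[starRingEnd ℂ] ℂ), ∀ n : ℕ, W (e n) = ζ n :=
  statement7_general hinfdim hseqcompl ζ
end
end

section
/- If (ξ_n)_{n≥1} ⊂ D is a Riesz-Fischer-like sequence, then for every (a_n)_{n≥1} ∈ ℓ² there exists a continuous conjugate-linear functional Φ ∈ D^× such that Φ(ξ_n) = a_n for every n ≥ 1 (in particular Σ_{k=1}^∞ |Φ(ξ_k)|² < ∞); that is, the analysis operator V : {Φ ∈ D^× : Σ_k |Φ(ξ_k)|² < ∞} → ℓ², VΦ := (Φ(ξ_k))_{k≥1}, is surjective. -/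
/-!
Since `H` is separable and infinite-dimensional, it has an orthonormal basis `(e_n)` indexed
by `ℕ`; let `S : D → H` be the map with `S ξ_n = e_n`. For `(a_n) ∈ ℓ²` the vector
`h = Σ a_n e_n` exists by completeness, and `Φ x = ⟪S x, h⟫` is continuous, conjugate-linear
and satisfies `Φ ξ_n = ⟪e_n, h⟫ = a_n`.
-/

open Filter Topology

noncomputable section

def RieszFischerLike (H : Type*) [NormedAddCommGroup H] [InnerProductSpace ℂ H]
    {D : Type*} [AddCommGroup D] [Module ℂ D] [TopologicalSpace D] (ξ : ℕ → D) : Prop :=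
  ∀ e : ℕ → H, IsONBasisSeq e → ∃ S : D →L[ℂ] H, ∀ n : ℕ, S (ξ n) = e n

section HilbertBasis

variable {𝕜 E ι : Type*} [RCLike 𝕜] [NormedAddCommGroup E] [InnerProductSpace 𝕜 E]

theorem Orthonormal.norm_sub_sq_eq_two {v : ι → E} (hv : Orthonormal 𝕜 v) {i j : ι}
    (hij : i ≠ j) : ‖v i - v j‖ ^ 2 = 2 := by
  rw [@norm_sub_sq 𝕜, hv.2 hij, hv.1 i, hv.1 j]
  norm_num

theorem Orthonormal.countable_s8 [TopologicalSpace.SeparableSpace E] {v : ι → E}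
    (hv : Orthonormal 𝕜 v) : Countable ι := by
  refine Pairwise.countable_of_isOpen_disjoint (s := fun i => Metric.ball (v i) (1 / 2))
    (fun i j hij => Metric.ball_disjoint_ball ?_) (fun _ => Metric.isOpen_ball)
    (fun _ => Metric.nonempty_ball.2 (by norm_num))
  have h2 := hv.norm_sub_sq_eq_two hij
  rw [dist_eq_norm]
  nlinarith [norm_nonneg (v i - v j)]

theorem HilbertBasis.finiteDimensional [Finite ι] (b : HilbertBasis ι 𝕜 E) :
    FiniteDimensional 𝕜 E :=
  have := Fintype.ofFinite ι
  b.toOrthonormalBasis.toBasis.finiteDimensional_of_finite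

variable [CompleteSpace E]

protected def HilbertBasis.reindex {ι' : Type*} (b : HilbertBasis ι 𝕜 E) (e : ι ≃ ι') :
    HilbertBasis ι' 𝕜 E :=
  HilbertBasis.mk (b.orthonormal.comp _ e.symm.injective)
    (by rw [e.symm.surjective.range_comp, b.dense_span])

theorem exists_hilbertBasis_nat [TopologicalSpace.SeparableSpace E]
    (h : ¬ FiniteDimensional 𝕜 E) : Nonempty (HilbertBasis ℕ 𝕜 E) := by
  obtain ⟨w, b, -⟩ := exists_hilbertBasis 𝕜 E
  have : Countable w := b.orthonormal.countable_s8
  have : Infinite w := not_finite_iff_infinite.mp fun _ => h b.finiteDimensional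
  obtain ⟨_⟩ := nonempty_denumerable w
  exact ⟨b.reindex (Denumerable.eqv w)⟩

end HilbertBasis

theorem HilbertBasis.isONBasisSeq {H : Type*} [NormedAddCommGroup H] [InnerProductSpace ℂ H]
    (b : HilbertBasis ℕ ℂ H) : IsONBasisSeq b :=
  ⟨b.orthonormal, Submodule.dense_iff_topologicalClosure_eq_top.mpr b.dense_span⟩

theorem statement8_general {D H : Type*} [AddCommGroup D] [Module ℂ D] [TopologicalSpace D]
    [NormedAddCommGroup H] [InnerProductSpace ℂ H] [CompleteSpace H]
    [TopologicalSpace.SeparableSpace H] (hinfdim : ¬ FiniteDimensional ℂ H)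
    (ξ : ℕ → D) (hRF : RieszFischerLike H ξ) :
    ∀ a : ℕ → ℂ, (Summable fun n => ‖a n‖ ^ 2) →
      ∃ Φ : D →SL[starRingEnd ℂ] ℂ,
        (∀ n : ℕ, Φ (ξ n) = a n) ∧ (Summable fun k => ‖Φ (ξ k)‖ ^ 2) := by
  intro a ha
  obtain ⟨b⟩ := exists_hilbertBasis_nat hinfdim
  obtain ⟨S, hS⟩ := hRF b b.isONBasisSeq
  let h : H := b.repr.symm ⟨a, memℓp_gen (by simpa using ha)⟩
  have hΦ : ∀ n, (innerSLFlip ℂ h ∘SL S) (ξ n) = a n := fun n => by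
    simp only [ContinuousLinearMap.comp_apply, innerSLFlip_apply_apply, hS n,
      ← b.repr_apply_apply, h, LinearIsometryEquiv.apply_symm_apply]
  exact ⟨innerSLFlip ℂ h ∘SL S, hΦ, by simpa only [hΦ] using ha⟩

/-- Proposition 2.14 of Bellomonte–Trapani: if `ξ ⊂ D` is a Riesz-Fischer-like sequence, then
for every `(a_n) ∈ ℓ²` there is a continuous conjugate-linear functional `Φ ∈ D^×` with
`Φ (ξ n) = a n` for all `n` (in particular `Σ_k |Φ (ξ k)|² < ∞`); i.e. the analysis operator
`V : {Φ ∈ D^× : Σ_k |Φ(ξ_k)|² < ∞} → ℓ²`, `V Φ = (Φ (ξ k))_k`, is surjective. -/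
theorem statement8 {D H : Type*} [AddCommGroup D] [Module ℂ D] [Module ℝ D] [IsScalarTower ℝ ℂ D]
    [TopologicalSpace D] [IsTopologicalAddGroup D] [ContinuousSMul ℂ D] [T2Space D]
    [LocallyConvexSpace ℝ D]
    [NormedAddCommGroup H] [InnerProductSpace ℂ H] [CompleteSpace H]
    [TopologicalSpace.SeparableSpace H] (hinfdim : ¬ FiniteDimensional ℂ H)
    (ξ : ℕ → D) (hRF : RieszFischerLike H ξ) :
    ∀ a : ℕ → ℂ, (Summable fun n => ‖a n‖ ^ 2) →
      ∃ Φ : D →SL[starRingEnd ℂ] ℂ,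
        (∀ n : ℕ, Φ (ξ n) = a n) ∧ (Summable fun k => ‖Φ (ξ k)‖ ^ 2) :=
  statement8_general hinfdim ξ hRF
end
end

section
/- Let (ξ_n)_{n≥1} be a Riesz-like basis of D, with injective continuous linear T : D[t] → H such that e_n := Tξ_n form an orthonormal basis of H, and let (ζ_n)_{n≥1} ⊂ D^× be the dual sequence of the Schauder basis (ξ_n). Then: (i) ζ_n(f) = ⟪Tf, e_n⟫ for every f ∈ D and n ≥ 1; (ii) Σ_{n=1}^∞ |ζ_n(f)|² = ‖Tf‖² for every f ∈ D; (iii) (ζ_n) is a Bessel-like sequence. -/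
/-!
Pushing the Schauder expansion `f = Σ c_n(f) ξ_n` forward along the continuous map `T` gives
`T f = Σ c_n(f) e_n`, and pairing with the orthonormal `e_n` picks out `c_n(f) = ⟪e_n, T f⟫`;
conjugating gives (i). Then (ii) is Parseval's identity for the orthonormal basis `(e_n)`, and
(iii) follows because `T` maps von Neumann bounded sets to norm-bounded ones.
-/

open Filter Topology

noncomputable section

/-- `ξ` is a Schauder basis with (continuous) coefficient functionals `c`. -/
def IsSchauderBasis {E : Type*} [AddCommGroup E] [Module ℂ E] [TopologicalSpace E]
    (ξ : ℕ → E) (c : ℕ → (E →L[ℂ] ℂ)) : Prop :=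
  ∀ f : E, SeriesTendsTo (fun n => c n f • ξ n) f ∧
    ∀ a : ℕ → ℂ, SeriesTendsTo (fun n => a n • ξ n) f → ∀ n, a n = c n f

theorem SeriesTendsTo.map {R E F : Type*} [Semiring R] [AddCommMonoid E] [Module R E]
    [TopologicalSpace E] [AddCommMonoid F] [Module R F] [TopologicalSpace F]
    {a : ℕ → E} {x : E} (h : SeriesTendsTo a x) (T : E →L[R] F) :
    SeriesTendsTo (fun n => T (a n)) (T x) := by
  simpa only [SeriesTendsTo, Function.comp_def, map_sum] using (T.continuous.tendsto x).comp h

theorem Orthonormal.inner_eq_of_seriesTendsTo {𝕜 E : Type*} [RCLike 𝕜] [SeminormedAddCommGroup E]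
    [InnerProductSpace 𝕜 E] {e : ℕ → E} (he : Orthonormal 𝕜 e) {a : ℕ → 𝕜} {x : E}
    (h : SeriesTendsTo (fun k => a k • e k) x) (n : ℕ) : inner 𝕜 (e n) x = a n := by
  refine tendsto_nhds_unique (((innerSL 𝕜 (e n)).continuous.tendsto x).comp h)
    (tendsto_const_nhds.congr' ?_)
  filter_upwards [eventually_gt_atTop n] with N hN
  exact (he.inner_right_sum a (Finset.mem_range.mpr hN)).symm

theorem HilbertBasis.hasSum_norm_inner_sq {ι 𝕜 E : Type*} [RCLike 𝕜] [NormedAddCommGroup E]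
    [InnerProductSpace 𝕜 E] (b : HilbertBasis ι 𝕜 E) (x : E) :
    HasSum (fun i => ‖inner 𝕜 (b i) x‖ ^ 2) (‖x‖ ^ 2) := by
  have h := b.hasSum_inner_mul_inner x x
  simp only [← inner_conj_symm x (b _), RCLike.conj_mul, inner_self_eq_norm_sq_to_K] at h
  exact_mod_cast h

theorem IsONBasisSeq.hasSum_norm_inner_sq {K : Type*} [NormedAddCommGroup K]
    [InnerProductSpace ℂ K] [CompleteSpace K] {e : ℕ → K} (he : IsONBasisSeq e) (x : K) :
    HasSum (fun n => ‖inner ℂ (e n) x‖ ^ 2) (‖x‖ ^ 2) := by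
  have hsp := (Submodule.dense_iff_topologicalClosure_eq_top.mp he.2).ge
  simpa only [HilbertBasis.coe_mk] using (HilbertBasis.mk he.1 hsp).hasSum_norm_inner_sq x

theorem besselLike_of_sum_sq_le_norm_sq {D H : Type*} [AddCommGroup D] [Module ℂ D]
    [TopologicalSpace D] [SeminormedAddCommGroup H] [NormedSpace ℂ H]
    (T : D →L[ℂ] H) {ζ : ℕ → (D →SL[starRingEnd ℂ] ℂ)}
    (h : ∀ η N, ∑ k ∈ Finset.range N, ‖ζ k η‖ ^ 2 ≤ ‖T η‖ ^ 2) : BesselLike ζ := by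
  intro M hM
  obtain ⟨r, hr⟩ := (NormedSpace.isVonNBounded_iff' ℂ).mp (hM.image T)
  refine ⟨r ^ 2, fun η hη N => (h η N).trans ?_⟩
  exact pow_le_pow_left₀ (norm_nonneg _) (hr _ ⟨η, hη, rfl⟩) 2

theorem statement12_general {D H : Type*} [AddCommGroup D] [Module ℂ D]
    [TopologicalSpace D]
    [NormedAddCommGroup H] [InnerProductSpace ℂ H] [CompleteSpace H]
    (ξ : ℕ → D) (c : ℕ → (D →L[ℂ] ℂ)) (hbasis : IsSchauderBasis ξ c)
    (T : D →L[ℂ] H)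
    (honb : IsONBasisSeq (fun n => T (ξ n)))
    (ζ : ℕ → (D →SL[starRingEnd ℂ] ℂ)) (hζ : ∀ (n : ℕ) (f : D), ζ n f = starRingEnd ℂ (c n f)) :
    (∀ (n : ℕ) (f : D), ζ n f = (inner ℂ (T f) (T (ξ n)) : ℂ)) ∧
    (∀ f : D, HasSum (fun n => ‖ζ n f‖ ^ 2) (‖T f‖ ^ 2)) ∧
    BesselLike ζ := by
  have hcoeff (n : ℕ) (f : D) : ζ n f = inner ℂ (T f) (T (ξ n)) := by
    have hTf : SeriesTendsTo (fun k => c k f • T (ξ k)) (T f) := by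
      simpa only [map_smul] using (hbasis f).1.map T
    rw [hζ, ← honb.1.inner_eq_of_seriesTendsTo hTf n, inner_conj_symm]
  have hparseval (f : D) : HasSum (fun n => ‖ζ n f‖ ^ 2) (‖T f‖ ^ 2) := by
    simpa only [hcoeff, norm_inner_symm] using honb.hasSum_norm_inner_sq (T f)
  refine ⟨hcoeff, hparseval, besselLike_of_sum_sq_le_norm_sq T fun η N => ?_⟩
  exact sum_le_hasSum _ (fun _ _ => by positivity) (hparseval η)

/-- Section 3.1 of Bellomonte–Trapani: if `ξ` is a Riesz-like basis of `D`, i.e. a Schauder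
basis mapped by an injective continuous linear `T : D → H` to an orthonormal basis
`e n = T (ξ n)` of `H`, and `ζ` is the dual sequence of `ξ`, then (i) `ζ n f = ⟪T f, e n⟫`,
(ii) `Σ_n |ζ n f|² = ‖T f‖²` for every `f ∈ D`, and (iii) `ζ` is Bessel-like. -/
theorem statement12 {D H : Type*} [AddCommGroup D] [Module ℂ D] [Module ℝ D] [IsScalarTower ℝ ℂ D]
    [TopologicalSpace D] [IsTopologicalAddGroup D] [ContinuousSMul ℂ D] [T2Space D]
    [LocallyConvexSpace ℝ D]
    [NormedAddCommGroup H] [InnerProductSpace ℂ H] [CompleteSpace H]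
    [TopologicalSpace.SeparableSpace H] (hinfdim : ¬ FiniteDimensional ℂ H)
    (ξ : ℕ → D) (c : ℕ → (D →L[ℂ] ℂ)) (hbasis : IsSchauderBasis ξ c)
    (T : D →L[ℂ] H) (hinj : Function.Injective T)
    (honb : IsONBasisSeq (fun n => T (ξ n)))
    (ζ : ℕ → (D →SL[starRingEnd ℂ] ℂ)) (hζ : ∀ (n : ℕ) (f : D), ζ n f = starRingEnd ℂ (c n f)) :
    (∀ (n : ℕ) (f : D), ζ n f = (inner ℂ (T f) (T (ξ n)) : ℂ)) ∧
    (∀ f : D, HasSum (fun n => ‖ζ n f‖ ^ 2) (‖T f‖ ^ 2)) ∧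
    BesselLike ζ :=
  statement12_general ξ c hbasis T honb ζ hζ
end
end

section
/- Let (ξ_n)_{n≥1} be a Riesz-like basis of D, with injective continuous linear T : D[t] → H such that (Tξ_n)_{n≥1} is an orthonormal basis of H. Then for Ψ ∈ D^× the following are equivalent: (a) Σ_{k=1}^∞ |Ψ(ξ_k)|² < ∞; (b) there exists h ∈ H such that Ψ(f) = ⟪Tf, h⟫ for every f ∈ D. (That is, the range of the extended adjoint T^† on H coincides with {Ψ ∈ D^× : Σ_k |Ψ(ξ_k)|² < ∞}.) -/
open Filter Topology

noncomputable section

/-! Condition (a) says that `k ↦ Ψ (ξ k)` is square summable, so by Riesz–Fischer it is the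
sequence of coefficients `⟪T ξ k, h⟫` of some `h ∈ H`. The functionals `Ψ` and `f ↦ ⟪T f, h⟫`
then agree on the Schauder basis, hence everywhere by continuity. The converse is Bessel's
inequality. -/

theorem Orthonormal.exists_inner_eq_of_summable_norm_sq {ι 𝕜 E : Type*} [RCLike 𝕜]
    [NormedAddCommGroup E] [InnerProductSpace 𝕜 E] [CompleteSpace E] {e : ι → E}
    (he : Orthonormal 𝕜 e) {a : ι → 𝕜} (ha : Summable fun i => ‖a i‖ ^ 2) :
    ∃ h : E, ∀ i, inner 𝕜 (e i) h = a i := by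
  classical
  obtain ⟨h, hsum⟩ : Summable fun i => a i • e i := by
    simpa using (he.orthogonalFamily.summable_iff_norm_sq_summable a).mpr ha
  refine ⟨h, fun i => (hsum.mapL (innerSL 𝕜 (e i))).unique ?_⟩
  convert hasSum_ite_eq i (a i) using 2 with k
  rw [innerSL_apply_apply, inner_smul_right, orthonormal_iff_ite.mp he]
  split_ifs <;> simp_all

theorem IsSchauderBasis.continuousLinearMap_ext {E F S : Type*} [AddCommGroup E] [Module ℂ E]
    [TopologicalSpace E] [Semiring S] [AddCommMonoid F] [Module S F] [TopologicalSpace F]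
    [T2Space F] {σ : ℂ →+* S} {ξ : ℕ → E} {c : ℕ → (E →L[ℂ] ℂ)} (hξ : IsSchauderBasis ξ c)
    {Ψ Φ : E →SL[σ] F} (h : ∀ n, Ψ (ξ n) = Φ (ξ n)) : Ψ = Φ := by
  ext f
  have hpartial : ∀ N, Ψ (∑ n ∈ Finset.range N, c n f • ξ n) =
      Φ (∑ n ∈ Finset.range N, c n f • ξ n) := by
    intro N
    simp only [map_sum, map_smulₛₗ, h]
  have hΨ := (Ψ.continuous.tendsto f).comp (hξ f).1
  have hΦ := (Φ.continuous.tendsto f).comp (hξ f).1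
  rw [Function.comp_def] at hΨ hΦ
  simp only [hpartial] at hΨ
  exact tendsto_nhds_unique hΨ hΦ

theorem statement13_general {D H : Type*} [AddCommGroup D] [Module ℂ D]
    [TopologicalSpace D]
    [NormedAddCommGroup H] [InnerProductSpace ℂ H] [CompleteSpace H]
    (ξ : ℕ → D) (c : ℕ → (D →L[ℂ] ℂ)) (hbasis : IsSchauderBasis ξ c)
    (T : D →L[ℂ] H)
    (honb : IsONBasisSeq (fun n => T (ξ n))) :
    ∀ Ψ : D →SL[starRingEnd ℂ] ℂ,
      (Summable fun k => ‖Ψ (ξ k)‖ ^ 2) ↔ ∃ h : H, ∀ f : D, Ψ f = (inner ℂ (T f) h : ℂ) := by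
  intro Ψ
  constructor
  · intro hsum
    obtain ⟨h, hh⟩ := honb.1.exists_inner_eq_of_summable_norm_sq hsum
    have hΨ : Ψ = (innerSLFlip ℂ h).comp T :=
      hbasis.continuousLinearMap_ext fun n => by simp [hh n]
    exact ⟨h, fun f => by simp [hΨ]⟩
  · rintro ⟨h, hh⟩
    simpa only [hh] using honb.1.inner_products_summable h

/-- Equation (3.2) (`eq_range`) of Bellomonte–Trapani: if `ξ` is a Riesz-like basis of `D`
(a Schauder basis mapped by the injective continuous linear `T : D → H` onto an orthonormal
basis of `H`), then for `Ψ ∈ D^×`: `Σ_k |Ψ (ξ k)|² < ∞` if and only if there is `h ∈ H` with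
`Ψ f = ⟪T f, h⟫` for all `f ∈ D` (i.e. `Ψ` lies in the range of the extension of `T^†`). -/
theorem statement13 {D H : Type*} [AddCommGroup D] [Module ℂ D] [Module ℝ D] [IsScalarTower ℝ ℂ D]
    [TopologicalSpace D] [IsTopologicalAddGroup D] [ContinuousSMul ℂ D] [T2Space D]
    [LocallyConvexSpace ℝ D]
    [NormedAddCommGroup H] [InnerProductSpace ℂ H] [CompleteSpace H]
    [TopologicalSpace.SeparableSpace H] (hinfdim : ¬ FiniteDimensional ℂ H)
    (ξ : ℕ → D) (c : ℕ → (D →L[ℂ] ℂ)) (hbasis : IsSchauderBasis ξ c)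
    (T : D →L[ℂ] H) (hinj : Function.Injective T)
    (honb : IsONBasisSeq (fun n => T (ξ n))) :
    ∀ Ψ : D →SL[starRingEnd ℂ] ℂ,
      (Summable fun k => ‖Ψ (ξ k)‖ ^ 2) ↔ ∃ h : H, ∀ f : D, Ψ f = (inner ℂ (T f) h : ℂ) :=
  statement13_general ξ c hbasis T honb
end
end

section
/- Assume D is complete and the strong conjugate dual D^×[t^×] is complete (the paper assumes D complete and reflexive with D^× quasi-complete). Let (ξ_n)_{n≥1} be a topological basis of D and suppose there exists a sequence (ζ_n)_{n≥1} ⊂ D^× with ζ_n(ξ_k) = δ_{nk} for all n,k, such that Σ_{n=1}^∞ |ζ_n(f)|² < ∞ for every f ∈ D and the seminorm p_ζ(f) := (Σ_{n=1}^∞ |ζ_n(f)|²)^{1/2} is continuous on D[t]. Then there exists a continuous linear map S : D[t] → D^×[t^×] such that Sξ_n = ζ_n for every n ≥ 1 and (Sf)(f) ≥ 0 (real and nonnegative) for every f ∈ D; in particular (ξ_n) and (Sξ_n) are biorthogonal. -/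
/-!
The coefficient map `J f = (ζ n f)ₙ` is a conjugate-linear map `D → ℓ²` whose norm is the
seminorm `p_ζ`, so it is continuous. Put `S f := ⟪J f, J ·⟫`: it is linear in `f`, `S f f = ‖J f‖²`,
and biorthogonality gives `J ξₙ = eₙ`, hence `S ξₙ = ⟪eₙ, J ·⟫ = ζₙ`. Continuity of `S` into the
strong dual holds because precomposition with `J` maps bounded sets of `D` to bounded sets of `ℓ²`.
-/

open Filter Topology

noncomputable section

/-- `ξ` is a topological basis of `D`: every `f ∈ D` has a unique expansion `f = Σ a n • ξ n`
converging in `D`. -/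
def IsTopBasisSeq {E : Type*} [AddCommGroup E] [Module ℂ E] [TopologicalSpace E]
    (ξ : ℕ → E) : Prop :=
  ∀ f : E, ∃! a : ℕ → ℂ, SeriesTendsTo (fun n => a n • ξ n) f

open scoped InnerProductSpace

section Ell2Coeffs

theorem memℓp_two_iff_summable_sq {ι : Type*} {F : ι → Type*} [∀ i, NormedAddCommGroup (F i)]
    {f : ∀ i, F i} : Memℓp f 2 ↔ Summable fun i => ‖f i‖ ^ 2 := by
  rw [memℓp_gen_iff (by norm_num)]
  norm_num

theorem lp.norm_two_eq_sqrt_tsum {ι : Type*} {F : ι → Type*} [∀ i, NormedAddCommGroup (F i)]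
    (f : lp F 2) : ‖f‖ = Real.sqrt (∑' i, ‖f i‖ ^ 2) := by
  rw [Real.sqrt_eq_rpow, lp.norm_eq_tsum_rpow (by norm_num)]
  norm_num

variable {ι 𝕜 E : Type*} [NormedField 𝕜] [AddCommGroup E] [Module 𝕜 E] {σ : 𝕜 →+* 𝕜}

def ell2Coeffs (ζ : ι → E →ₛₗ[σ] 𝕜) (hζ : ∀ f, Summable fun i => ‖ζ i f‖ ^ 2) :
    E →ₛₗ[σ] lp (fun _ : ι => 𝕜) 2 where
  toFun f := ⟨fun i => ζ i f, memℓp_two_iff_summable_sq.2 (hζ f)⟩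
  map_add' f g := by ext i; exact map_add (ζ i) f g
  map_smul' c f := by ext i; simp [lp.coeFn_smul]

variable [TopologicalSpace E] [IsTopologicalAddGroup E]

def ell2CoeffsCLM (ζ : ι → E →ₛₗ[σ] 𝕜) (hζ : ∀ f, Summable fun i => ‖ζ i f‖ ^ 2)
    (hcont : Continuous fun f => Real.sqrt (∑' i, ‖ζ i f‖ ^ 2)) :
    E →SL[σ] lp (fun _ : ι => 𝕜) 2 where
  toLinearMap := ell2Coeffs ζ hζ
  cont := by
    refine continuous_of_continuousAt_zero (ell2Coeffs ζ hζ) ?_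
    rw [ContinuousAt, map_zero, tendsto_zero_iff_norm_tendsto_zero]
    simpa [lp.norm_two_eq_sqrt_tsum, ell2Coeffs] using hcont.tendsto 0

@[simp]
theorem ell2CoeffsCLM_apply (ζ : ι → E →ₛₗ[σ] 𝕜) (hζ : ∀ f, Summable fun i => ‖ζ i f‖ ^ 2)
    (hcont : Continuous fun f => Real.sqrt (∑' i, ‖ζ i f‖ ^ 2)) (f : E) (i : ι) :
    ell2CoeffsCLM ζ hζ hcont f i = ζ i f :=
  rfl

end Ell2Coeffs

section InnerComp

variable {𝕜 E H : Type*} [RCLike 𝕜] [AddCommGroup E] [Module 𝕜 E] [TopologicalSpace E]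
  [NormedAddCommGroup H] [InnerProductSpace 𝕜 H]

def ContinuousLinearMap.innerComp (J : E →L⋆[𝕜] H) : E →L[𝕜] E →L⋆[𝕜] 𝕜 :=
  (ContinuousLinearMap.precomp 𝕜 J).comp ((innerSL 𝕜).comp J)

@[simp]
theorem ContinuousLinearMap.innerComp_apply (J : E →L⋆[𝕜] H) (f g : E) :
    J.innerComp f g = ⟪J f, J g⟫_𝕜 :=
  rfl

end InnerComp

theorem statement15_general {D : Type*} [AddCommGroup D] [Module ℂ D]
    [UniformSpace D] [IsUniformAddGroup D]
    (ξ : ℕ → D)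
    (ζ : ℕ → (D →SL[starRingEnd ℂ] ℂ))
    (hbio : ∀ n k : ℕ, ζ n (ξ k) = if n = k then 1 else 0)
    (hsumm : ∀ f : D, Summable fun n => ‖ζ n f‖ ^ 2)
    (hcont : Continuous fun f : D => Real.sqrt (∑' n, ‖ζ n f‖ ^ 2)) :
    ∃ S : D →L[ℂ] (D →SL[starRingEnd ℂ] ℂ),
      (∀ n : ℕ, S (ξ n) = ζ n) ∧
      (∀ f : D, 0 ≤ (S f f).re ∧ (S f f).im = 0) ∧
      (∀ n k : ℕ, S (ξ n) (ξ k) = if n = k then 1 else 0) := by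
  set J := ell2CoeffsCLM (fun n => (ζ n : D →ₛₗ[starRingEnd ℂ] ℂ)) hsumm hcont
  have hJξ (n : ℕ) : J (ξ n) = lp.single 2 n 1 := by
    ext k
    simp [J, hbio, Pi.single_apply]
  have hSξ (n : ℕ) : J.innerComp (ξ n) = ζ n := by
    ext g
    rw [ContinuousLinearMap.innerComp_apply, hJξ, lp.inner_single_left]
    simp [J]
  refine ⟨J.innerComp, hSξ, fun f => ⟨?_, ?_⟩, fun n k => by rw [hSξ, hbio]⟩
  · simpa using inner_self_nonneg (𝕜 := ℂ) (x := J f)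
  · simpa using inner_self_im (𝕜 := ℂ) (J f)

/-- Theorem 3.4, (ii) ⇒ (iii), of Bellomonte–Trapani: assume `D` complete and the strong
conjugate dual `D^×[t^×]` complete. If `ξ` is a topological basis of `D` and `ζ ⊂ D^×` is
biorthogonal to `ξ`, with `Σ_n |ζ n f|² < ∞` for all `f` and the seminorm
`p_ζ(f) = (Σ_n |ζ n f|²)^{1/2}` continuous on `D[t]`, then there is a continuous linear map
`S : D[t] → D^×[t^×]` with `S ξ_n = ζ_n` for all `n` and `(S f)(f) ≥ 0` (real, nonnegative)
for all `f ∈ D`; in particular `ξ` and `(S ξ_n)` are biorthogonal. -/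
theorem statement15 {D : Type*} [AddCommGroup D] [Module ℂ D] [Module ℝ D] [IsScalarTower ℝ ℂ D]
    [UniformSpace D] [IsUniformAddGroup D] [ContinuousSMul ℂ D] [T2Space D]
    [LocallyConvexSpace ℝ D] [CompleteSpace D]
    [CompleteSpace (D →SL[starRingEnd ℂ] ℂ)]
    (ξ : ℕ → D) (hbasis : IsTopBasisSeq ξ)
    (ζ : ℕ → (D →SL[starRingEnd ℂ] ℂ))
    (hbio : ∀ n k : ℕ, ζ n (ξ k) = if n = k then 1 else 0)
    (hsumm : ∀ f : D, Summable fun n => ‖ζ n f‖ ^ 2)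
    (hcont : Continuous fun f : D => Real.sqrt (∑' n, ‖ζ n f‖ ^ 2)) :
    ∃ S : D →L[ℂ] (D →SL[starRingEnd ℂ] ℂ),
      (∀ n : ℕ, S (ξ n) = ζ n) ∧
      (∀ f : D, 0 ≤ (S f f).re ∧ (S f f).im = 0) ∧
      (∀ n k : ℕ, S (ξ n) (ξ k) = if n = k then 1 else 0) :=
  statement15_general ξ ζ hbio hsumm hcont
end
end
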